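/- Let x ~ N(μ, Θ⁻¹) with Θ positive definite and T a p×p real matrix. Then E[exp(nᵀx) · trace(T(x−μ)(x−μ)ᵀ)] = (trace(TΘ⁻¹) + nᵀΘ⁻¹TΘ⁻¹n) · exp(nᵀμ + nᵀΘ⁻¹n/2). -/

import Mathlib

/-!
Write `Θ⁻¹ = A Aᵀ` and substitute `x = A z + μ`: the density of `x` becomes the standard Gaussian
density of `z`, and the weight `exp (nᵀx)` tilts it into the `N(m, I)` density, `m = Aᵀ n`, at the
cost of the factor `exp (nᵀμ + mᵀm / 2)`. The quadratic form becomes `zᵀ (AᵀTA) z`, whose mean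
under `N(m, I)` is `tr (AᵀTA) + mᵀ (AᵀTA) m`; translating back with `A Aᵀ = Θ⁻¹` gives the claim.
-/

open Real MeasureTheory Matrix

/-- Density of `N(μ, Θ⁻¹)` on `ℝ^p`, written in terms of the precision matrix `Θ`. -/
noncomputable def gaussDensity (p : ℕ) (Θ : Matrix (Fin p) (Fin p) ℝ) (μ : Fin p → ℝ)
    (x : Fin p → ℝ) : ℝ :=
  (2 * Real.pi) ^ (-(p : ℝ) / 2) * Real.sqrt Θ.det *
    Real.exp (-((x - μ) ⬝ᵥ Θ.mulVec (x - μ)) / 2)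

open ProbabilityTheory
open scoped NNReal MatrixOrder

section MatrixAlgebra

variable {ι κ R : Type*} [Fintype ι] [Fintype κ]

lemma mulVec_dotProduct_mulVec_mulVec [CommSemiring R] (A : Matrix ι κ R) (M : Matrix ι ι R)
    (u v : κ → R) : (A *ᵥ u) ⬝ᵥ M *ᵥ (A *ᵥ v) = u ⬝ᵥ (Aᵀ * M * A) *ᵥ v := by
  rw [mulVec_mulVec, dotProduct_mulVec, ← vecMul_transpose, vecMul_vecMul, ← dotProduct_mulVec,
    Matrix.mul_assoc]

lemma dotProduct_mulVec_self_eq_sum [CommSemiring R] (M : Matrix ι ι R) (z : ι → R) :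
    z ⬝ᵥ M *ᵥ z = ∑ i, ∑ j, M i j * (z i * z j) := by
  simp only [dotProduct, mulVec, Finset.mul_sum]
  exact Finset.sum_congr rfl fun i _ => Finset.sum_congr rfl fun j _ => by ring

lemma trace_mul_vecMulVec_self [CommSemiring R] (T : Matrix ι ι R) (u : ι → R) :
    (T * vecMulVec u u).trace = u ⬝ᵥ T *ᵥ u := by
  rw [mul_vecMulVec, trace_vecMulVec, dotProduct_comm]

variable [DecidableEq ι]

lemma prod_mul_mul_eq_prod_mul_ite [CommMonoid R] (g z : ι → R) (i j : ι) :
    (∏ k, g k) * (z i * z j) =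
      ∏ k, g k * ((if k = i then z k else 1) * (if k = j then z k else 1)) := by
  simp only [Finset.prod_mul_distrib, Finset.prod_ite_eq', Finset.mem_univ, if_true]

lemma Matrix.PosSemidef.exists_mul_transpose_eq {S : Matrix ι ι ℝ} (hS : S.PosSemidef) :
    ∃ A : Matrix ι ι ℝ, A * Aᵀ = S := by
  obtain ⟨B, rfl⟩ := CStarAlgebra.nonneg_iff_eq_star_mul_self.mp hS.nonneg
  exact ⟨Bᵀ, by simp [star_eq_conjTranspose, conjTranspose_eq_transpose_of_trivial]⟩

lemma transpose_mul_mul_eq_one {A Θ : Matrix ι ι ℝ} (hΘ : IsUnit Θ.det) (hA : A * Aᵀ = Θ⁻¹) :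
    Aᵀ * Θ * A = 1 :=
  mul_eq_one_comm.mp (by rw [← Matrix.mul_assoc, hA, nonsing_inv_mul Θ hΘ])

lemma abs_det_mul_sqrt_det {A Θ : Matrix ι ι ℝ} (hA : Aᵀ * Θ * A = 1) : |A.det| * √Θ.det = 1 := by
  have h : A.det ^ 2 * Θ.det = 1 := by
    have := congrArg det hA
    rw [det_mul, det_mul, det_transpose, det_one] at this
    linear_combination this
  rw [← sqrt_sq_eq_abs, ← sqrt_mul (sq_nonneg _), h, sqrt_one]

end MatrixAlgebra

lemma integral_comp_mulVec_add {ι E : Type*} [Fintype ι] [DecidableEq ι] [NormedAddCommGroup E]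
    [NormedSpace ℝ E] {A : Matrix ι ι ℝ} (hA : A.det ≠ 0) (μ : ι → ℝ) (f : (ι → ℝ) → E) :
    ∫ z, f (A *ᵥ z + μ) = |A.det|⁻¹ • ∫ x, f x := by
  have he : MeasurableEmbedding (toLin' A) :=
    (toLinearEquiv' A (A.invertibleOfIsUnitDet hA.isUnit)).toContinuousLinearEquiv.toHomeomorph
      |>.measurableEmbedding
  have h := he.integral_map (μ := volume) fun x => f (x + μ)
  rw [Real.map_matrix_volume_pi_eq_smul_volume_pi hA, integral_smul_measure,
    ENNReal.toReal_ofReal (abs_nonneg _), abs_inv, integral_add_right_eq_self] at h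
  simpa only [toLin'_apply] using h.symm

namespace ProbabilityTheory

variable {ι : Type*} [Fintype ι]

lemma gaussianPDFReal_mul_exp (μ : ℝ) (v : ℝ≥0) (a w : ℝ) :
    gaussianPDFReal μ v w * exp (a * w) =
      exp (a * μ + v * a ^ 2 / 2) * gaussianPDFReal (μ + v * a) v w := by
  rcases eq_or_ne v 0 with rfl | hv
  · simp
  have hv' : (v : ℝ) ≠ 0 := by exact_mod_cast hv
  simp only [gaussianPDFReal]
  rw [mul_left_comm, mul_assoc, ← exp_add, ← exp_add]
  congr 2
  field_simp
  ring

lemma prod_gaussianPDFReal_mul_exp_dotProduct (μ : ι → ℝ) (v : ℝ≥0) (a z : ι → ℝ) :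
    (∏ k, gaussianPDFReal (μ k) v (z k)) * exp (a ⬝ᵥ z) =
      exp (a ⬝ᵥ μ + v * (a ⬝ᵥ a) / 2) * ∏ k, gaussianPDFReal (μ k + v * a k) v (z k) := by
  simp only [dotProduct, exp_sum, ← Finset.prod_mul_distrib, gaussianPDFReal_mul_exp,
    Finset.mul_sum, Finset.sum_div, ← Finset.sum_add_distrib, sq]

lemma prod_gaussianPDFReal_zero_one (z : ι → ℝ) :
    ∏ k, gaussianPDFReal 0 1 (z k) =
      (2 * π) ^ (-(Fintype.card ι : ℝ) / 2) * exp (-(z ⬝ᵥ z) / 2) := by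
  simp only [gaussianPDFReal, NNReal.coe_one, mul_one, sub_zero, Finset.prod_mul_distrib,
    Finset.prod_const, Finset.card_univ, ← exp_sum, dotProduct, ← sq, Finset.sum_div,
    ← Finset.sum_neg_distrib, neg_div]
  rw [sqrt_eq_rpow, ← rpow_neg (by positivity), ← rpow_natCast, ← rpow_mul (by positivity)]
  ring_nf

lemma integral_mul_self_gaussianReal (μ : ℝ) (v : ℝ≥0) :
    ∫ w, w * w ∂gaussianReal μ v = v + μ ^ 2 := by
  have h := variance_eq_sub (memLp_id_gaussianReal (μ := μ) (v := v) 2)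
  simp only [variance_id_gaussianReal, integral_id_gaussianReal, Pi.pow_apply, id] at h
  simp only [← sq]
  linarith

lemma integrable_ite_mul_ite_gaussianReal (μ : ℝ) (v : ℝ≥0) (p q : Prop) [Decidable p]
    [Decidable q] :
    Integrable (fun w => (if p then w else 1) * (if q then w else 1)) (gaussianReal μ v) := by
  have h1 : Integrable (fun w : ℝ => w) (gaussianReal μ v) :=
    (memLp_id_gaussianReal (μ := μ) (v := v) 1).integrable le_rfl
  have h2 : Integrable (fun w : ℝ => w * w) (gaussianReal μ v) := by
    simpa [sq] using (memLp_id_gaussianReal (μ := μ) (v := v) 2).integrable_sq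
  split_ifs
  · exact h2
  · simpa using h1
  · simpa using h1
  · simp

lemma integrable_gaussianPDFReal_mul_iff {μ : ℝ} {v : ℝ≥0} (hv : v ≠ 0) {f : ℝ → ℝ} :
    Integrable (fun w => gaussianPDFReal μ v w * f w) ↔ Integrable f (gaussianReal μ v) := by
  rw [gaussianReal_of_var_ne_zero _ hv, integrable_withDensity_iff_integrable_smul'
    (measurable_gaussianPDF μ v) (ae_of_all _ fun _ => gaussianPDF_lt_top)]
  simp only [toReal_gaussianPDF, smul_eq_mul]

variable (μ : ι → ℝ) {v : ℝ≥0}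

lemma integral_prod_gaussianPDFReal_mul (hv : v ≠ 0) (f : ι → ℝ → ℝ) :
    ∫ z : ι → ℝ, ∏ k, gaussianPDFReal (μ k) v (z k) * f k (z k) =
      ∏ k, ∫ w, f k w ∂gaussianReal (μ k) v := by
  rw [integral_fintype_prod_volume_eq_prod (fun k w => gaussianPDFReal (μ k) v w * f k w)]
  simp only [integral_gaussianReal_eq_integral_smul hv, smul_eq_mul]

lemma integrable_prod_gaussianPDFReal_mul (hv : v ≠ 0) {f : ι → ℝ → ℝ}
    (hf : ∀ k, Integrable (f k) (gaussianReal (μ k) v)) :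
    Integrable (fun z : ι → ℝ => ∏ k, gaussianPDFReal (μ k) v (z k) * f k (z k)) :=
  Integrable.fintype_prod (f := fun k w => gaussianPDFReal (μ k) v w * f k w)
    fun k => (integrable_gaussianPDFReal_mul_iff hv).2 (hf k)

lemma integrable_prod_gaussianPDFReal_mul_apply_mul_apply [DecidableEq ι] (hv : v ≠ 0) (i j : ι) :
    Integrable fun z : ι → ℝ => (∏ k, gaussianPDFReal (μ k) v (z k)) * (z i * z j) := by
  simp only [prod_mul_mul_eq_prod_mul_ite]
  exact integrable_prod_gaussianPDFReal_mul μ hv fun k =>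
    integrable_ite_mul_ite_gaussianReal _ _ _ _

lemma integral_prod_gaussianPDFReal_mul_apply_mul_apply [DecidableEq ι] (hv : v ≠ 0) (i j : ι) :
    ∫ z : ι → ℝ, (∏ k, gaussianPDFReal (μ k) v (z k)) * (z i * z j) =
      (if i = j then (v : ℝ) else 0) + μ i * μ j := by
  simp only [prod_mul_mul_eq_prod_mul_ite]
  refine (integral_prod_gaussianPDFReal_mul μ hv
    fun k w => (if k = i then w else 1) * (if k = j then w else 1)).trans ?_
  rcases eq_or_ne i j with rfl | hij
  · rw [Finset.prod_eq_single i (fun k _ hk => by simp [hk]) (by simp)]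
    simp [integral_mul_self_gaussianReal, sq]
  · rw [← Finset.mul_prod_erase _ _ (Finset.mem_univ i),
      ← Finset.mul_prod_erase _ _ (Finset.mem_erase.2 ⟨hij.symm, Finset.mem_univ j⟩),
      Finset.prod_eq_one fun k hk => ?_]
    · simp [hij, Ne.symm hij, integral_id_gaussianReal]
    · obtain ⟨hkj, hki⟩ := Finset.mem_erase.1 hk
      simp [hkj, (Finset.mem_erase.1 hki).1]

lemma integral_prod_gaussianPDFReal_mul_dotProduct_mulVec (hv : v ≠ 0) (M : Matrix ι ι ℝ) :
    ∫ z : ι → ℝ, (∏ k, gaussianPDFReal (μ k) v (z k)) * (z ⬝ᵥ M *ᵥ z) =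
      v * M.trace + μ ⬝ᵥ M *ᵥ μ := by
  classical
  have hint := integrable_prod_gaussianPDFReal_mul_apply_mul_apply μ hv
  calc ∫ z : ι → ℝ, (∏ k, gaussianPDFReal (μ k) v (z k)) * (z ⬝ᵥ M *ᵥ z)
      = ∑ i, ∑ j, M i j * ∫ z : ι → ℝ, (∏ k, gaussianPDFReal (μ k) v (z k)) * (z i * z j) := by
        simp only [dotProduct_mulVec_self_eq_sum, Finset.mul_sum, mul_left_comm _ (M _ _)]
        rw [integral_finsetSum Finset.univ fun i _ =>
          integrable_finsetSum Finset.univ fun j _ => (hint i j).const_mul (M i j)]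
        simp only [integral_finsetSum Finset.univ fun j _ => (hint _ j).const_mul _,
          integral_const_mul]
    _ = v * M.trace + μ ⬝ᵥ M *ᵥ μ := by
        simp only [integral_prod_gaussianPDFReal_mul_apply_mul_apply μ hv, mul_add,
          Finset.sum_add_distrib, mul_ite, mul_zero, Finset.sum_ite_eq, Finset.mem_univ, if_true,
          dotProduct_mulVec_self_eq_sum, trace, diag_apply, ← Finset.sum_mul]
        ring

end ProbabilityTheory

section GaussDensity

variable {p : ℕ} {A Θ : Matrix (Fin p) (Fin p) ℝ}

lemma abs_det_mul_gaussDensity_mulVec_add (hA : Aᵀ * Θ * A = 1) (μ z : Fin p → ℝ) :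
    |A.det| * gaussDensity p Θ μ (A *ᵥ z + μ) = ∏ k, gaussianPDFReal 0 1 (z k) := by
  rw [prod_gaussianPDFReal_zero_one, Fintype.card_fin, gaussDensity, add_sub_cancel_right,
    mulVec_dotProduct_mulVec_mulVec, hA, one_mulVec, ← mul_assoc, mul_left_comm,
    abs_det_mul_sqrt_det hA, mul_one]

lemma integral_gaussDensity_mul (hA : Aᵀ * Θ * A = 1) (μ : Fin p → ℝ) (F : (Fin p → ℝ) → ℝ) :
    ∫ x, gaussDensity p Θ μ x * F x =
      ∫ z, (∏ k, gaussianPDFReal 0 1 (z k)) * F (A *ᵥ z + μ) := by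
  have hdet : A.det ≠ 0 := fun h => by simpa [h] using abs_det_mul_sqrt_det hA
  rw [← mul_inv_cancel_left₀ (abs_ne_zero.2 hdet) (∫ x, gaussDensity p Θ μ x * F x),
    ← smul_eq_mul _ (∫ x, _), ← integral_comp_mulVec_add hdet μ, ← integral_const_mul]
  simp only [← mul_assoc, abs_det_mul_gaussDensity_mulVec_add hA]

end GaussDensity

theorem stmt_6 (p : ℕ) (Θ : Matrix (Fin p) (Fin p) ℝ) (μ : Fin p → ℝ) (hΘ : Θ.PosDef)
    (n : Fin p → ℝ) (T : Matrix (Fin p) (Fin p) ℝ) :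
    (∫ x : Fin p → ℝ, gaussDensity p Θ μ x *
        (Real.exp (n ⬝ᵥ x) *
          (T * Matrix.vecMulVec (x - μ) (x - μ)).trace)) =
      ((T * Θ⁻¹).trace + n ⬝ᵥ (Θ⁻¹ * T * Θ⁻¹).mulVec n) *
        Real.exp (n ⬝ᵥ μ + n ⬝ᵥ Θ⁻¹.mulVec n / 2) := by
  obtain ⟨A, hAA⟩ := hΘ.inv.posSemidef.exists_mul_transpose_eq
  have hA : Aᵀ * Θ * A = 1 := transpose_mul_mul_eq_one hΘ.det_pos.ne'.isUnit hAA
  set m := Aᵀ *ᵥ n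
  have htilt (z : Fin p → ℝ) : (∏ k, gaussianPDFReal 0 1 (z k)) * exp (m ⬝ᵥ z) =
      exp (m ⬝ᵥ m / 2) * ∏ k, gaussianPDFReal (m k) 1 (z k) := by
    simpa using prod_gaussianPDFReal_mul_exp_dotProduct 0 1 m z
  have hsymm : (Θ⁻¹)ᵀ = Θ⁻¹ := by rw [← hAA, transpose_mul, transpose_transpose]
  have hmm : m ⬝ᵥ m = n ⬝ᵥ Θ⁻¹ *ᵥ n := by
    simpa [hAA] using mulVec_dotProduct_mulVec_mulVec Aᵀ 1 n n
  calc _ = ∫ z, exp (n ⬝ᵥ μ + m ⬝ᵥ m / 2) *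
        ((∏ k, gaussianPDFReal (m k) 1 (z k)) * (z ⬝ᵥ (Aᵀ * T * A) *ᵥ z)) := by
        rw [integral_gaussDensity_mul hA]
        refine integral_congr_ae (ae_of_all _ fun z => ?_)
        simp only [add_sub_cancel_right, trace_mul_vecMulVec_self, mulVec_dotProduct_mulVec_mulVec,
          dotProduct_add, dotProduct_mulVec n A, ← mulVec_transpose, exp_add]
        linear_combination (exp (n ⬝ᵥ μ) * (z ⬝ᵥ (Aᵀ * T * A) *ᵥ z)) * htilt z
    _ = exp (n ⬝ᵥ μ + m ⬝ᵥ m / 2) * ((Aᵀ * T * A).trace + m ⬝ᵥ (Aᵀ * T * A) *ᵥ m) := by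
        rw [integral_const_mul, integral_prod_gaussianPDFReal_mul_dotProduct_mulVec m one_ne_zero,
          NNReal.coe_one, one_mul]
    _ = _ := by
        rw [trace_mul_cycle, trace_mul_comm, hAA, ← mulVec_dotProduct_mulVec_mulVec, mulVec_mulVec,
          hAA, mulVec_dotProduct_mulVec_mulVec, hsymm, hmm, mul_comm]
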